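/- Unique first coefficients (first half of the connection theorem, coordinate form): let L be a regular smooth second-order Lagrangian on E with canonical semispray S. There exists exactly one family of smooth functions N_{ij} : E → ℝ satisfying 2N_{ij} + 4N_{ji} = 2 S(g_{ij}) + ∂²L/∂y¹ⁱ∂y²ʲ for all i, j, and it is given by N_{ij} = (1/3) S(g_{ij}) + (1/3) ∂²L/∂y²ⁱ∂y¹ʲ − (1/6) ∂²L/∂y²ʲ∂y¹ⁱ; moreover this N automatically satisfies 2N_{ij} − 2N_{ji} = ∂²L/∂y²ⁱ∂y¹ʲ − ∂²L/∂y²ʲ∂y¹ⁱ. -/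

import Mathlib

noncomputable section

/-- `E n = ℝⁿ × ℝⁿ × ℝⁿ`, the standard chart of the second-order tangent bundle `T²ℝⁿ`,
with points `u = (x, y¹, y²)`. -/
abbrev E (n : ℕ) := (Fin n → ℝ) × (Fin n → ℝ) × (Fin n → ℝ)

/-- Partial derivative `∂f/∂xⁱ`. -/
def px {n : ℕ} (f : E n → ℝ) (i : Fin n) (u : E n) : ℝ :=
  fderiv ℝ f u (Pi.single i 1, 0, 0)

/-- Partial derivative `∂f/∂y¹ⁱ`. -/
def p1 {n : ℕ} (f : E n → ℝ) (i : Fin n) (u : E n) : ℝ :=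
  fderiv ℝ f u (0, Pi.single i 1, 0)

/-- Partial derivative `∂f/∂y²ⁱ`. -/
def p2 {n : ℕ} (f : E n → ℝ) (i : Fin n) (u : E n) : ℝ :=
  fderiv ℝ f u (0, 0, Pi.single i 1)

/-- The Cartan–Poincaré one-form `θ¹_L(u)(X) = Σᵢ [∂L/∂y¹ⁱ(u) X₀ⁱ + ∂L/∂y²ⁱ(u) X₁ⁱ]`. -/
def theta1 {n : ℕ} (L : E n → ℝ) (u : E n) (X : E n) : ℝ :=
  ∑ i, (p1 L i u * X.1 i + p2 L i u * X.2.1 i)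

/-- The Cartan–Poincaré one-form `θ²_L(u)(X) = Σᵢ ∂L/∂y²ⁱ(u) X₀ⁱ`. -/
def theta2 {n : ℕ} (L : E n → ℝ) (u : E n) (X : E n) : ℝ :=
  ∑ i, p2 L i u * X.1 i

/-- Exterior derivative of a one-form:
`dθ(u)(X,Y) = D(θ(·)(Y))(u)(X) − D(θ(·)(X))(u)(Y)`. -/
def extd {n : ℕ} (θ : E n → E n → ℝ) (u : E n) (X Y : E n) : ℝ :=
  fderiv ℝ (fun v => θ v Y) u X - fderiv ℝ (fun v => θ v X) u Y

/-- Cartan–Poincaré two-form `ω¹_L = dθ¹_L`. -/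
def omega1 {n : ℕ} (L : E n → ℝ) : E n → E n → E n → ℝ := extd (theta1 L)

/-- Cartan–Poincaré two-form `ω²_L = dθ²_L`. -/
def omega2 {n : ℕ} (L : E n → ℝ) : E n → E n → E n → ℝ := extd (theta2 L)

/-- The second-order tangent structure `J(a,b,c) = (0,a,b)`. -/
def Jmap {n : ℕ} (X : E n) : E n := (0, X.1, X.2.1)

/-- The semispray with coefficients `G`: `S(u) = (y¹, 2y², −3G(u))`. -/
def spray {n : ℕ} (G : E n → Fin n → ℝ) (u : E n) : E n :=
  (u.2.1, fun i => 2 * u.2.2 i, fun i => -3 * G u i)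

/-- The semispray with coefficients `G` acting as a derivation on functions:
`(Sf)(u) = Σᵢ [y¹ⁱ ∂f/∂xⁱ + 2y²ⁱ ∂f/∂y¹ⁱ − 3Gⁱ(u) ∂f/∂y²ⁱ]`. -/
def Sop {n : ℕ} (G : E n → Fin n → ℝ) (f : E n → ℝ) (u : E n) : ℝ :=
  ∑ i, (u.2.1 i * px f i u + 2 * u.2.2 i * p1 f i u - 3 * G u i * p2 f i u)

/-- Lie derivative of a one-form along a vector field `S`:
`(𝓛_S θ)(u)(X) = D(θ(·)(X))(u)(S(u)) + θ(u)(DS(u)(X))`. -/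
def lieForm {n : ℕ} (S : E n → E n) (θ : E n → E n → ℝ) (u : E n) (X : E n) : ℝ :=
  fderiv ℝ (fun v => θ v X) u (S u) + θ u (fderiv ℝ S u X)

/-- The Liouville operator `(C₂f)(u) = Σᵢ [y¹ⁱ ∂f/∂y¹ⁱ + 2y²ⁱ ∂f/∂y²ⁱ]`. -/
def C2op {n : ℕ} (f : E n → ℝ) (u : E n) : ℝ :=
  ∑ i, (u.2.1 i * p1 f i u + 2 * u.2.2 i * p2 f i u)

/-- The Liouville operator `(C₁f)(u) = Σᵢ y¹ⁱ ∂f/∂y²ⁱ`. -/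
def C1op {n : ℕ} (f : E n → ℝ) (u : E n) : ℝ :=
  ∑ i, u.2.1 i * p2 f i u

/-- The metric tensor `g_{ij} = ½ ∂²L/∂y²ⁱ∂y²ʲ` of a second-order Lagrangian. -/
def gmet {n : ℕ} (L : E n → ℝ) (i j : Fin n) (u : E n) : ℝ := (1/2) * p2 (p2 L j) i u

/-- The metric tensor as a matrix. -/
def gmat {n : ℕ} (L : E n → ℝ) (u : E n) : Matrix (Fin n) (Fin n) ℝ :=
  Matrix.of fun i j => gmet L i j u

/-- The Tulczyjew operator `(d_T f)(u) = Σᵢ [y¹ⁱ ∂f/∂xⁱ + 2y²ⁱ ∂f/∂y¹ⁱ]`. -/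
def dT {n : ℕ} (f : E n → ℝ) (u : E n) : ℝ :=
  ∑ i, (u.2.1 i * px f i u + 2 * u.2.2 i * p1 f i u)

/-- The canonical semispray coefficients
`Gʲ = (1/6) Σᵢ gʲⁱ [d_T(∂L/∂y²ⁱ) − ∂L/∂y¹ⁱ]` of a regular second-order Lagrangian. -/
def Gcan {n : ℕ} (L : E n → ℝ) (u : E n) (j : Fin n) : ℝ :=
  (1/6) * ∑ i, (gmat L u)⁻¹ j i * (dT (p2 L i) u - p1 L i u)

/-- The candidate first coefficients of the canonical nonlinear connection:
`N_{ij} = (1/3) S(g_{ij}) + (1/3) ∂²L/∂y²ⁱ∂y¹ʲ − (1/6) ∂²L/∂y²ʲ∂y¹ⁱ`. -/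
def Ncan {n : ℕ} (L : E n → ℝ) (i j : Fin n) (u : E n) : ℝ :=
  (1/3) * Sop (Gcan L) (fun v => gmet L i j v) u
    + (1/3) * p2 (p1 L j) i u - (1/6) * p2 (p1 L i) j u


section Helpers

variable {n : ℕ}

lemma pd_smooth {f : E n → ℝ} (hf : ContDiff ℝ (⊤ : ℕ∞) f) (w : E n) :
    ContDiff ℝ (⊤ : ℕ∞) (fun u => fderiv ℝ f u w) :=
  (hf.fderiv_right (by simp)).clm_apply contDiff_const

lemma swap_pd {f : E n → ℝ} (hf : ContDiff ℝ (⊤ : ℕ∞) f) (v w u : E n) :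
    fderiv ℝ (fun z => fderiv ℝ f z w) u v = fderiv ℝ (fun z => fderiv ℝ f z v) u w := by
  have hd : DifferentiableAt ℝ (fderiv ℝ f) u :=
    ((hf.fderiv_right (m := (⊤ : ℕ∞)) (by simp)).differentiable (by simp)) u
  have h1 : ∀ w v : E n, fderiv ℝ (fun z => fderiv ℝ f z w) u v
      = fderiv ℝ (fderiv ℝ f) u v w := by
    intro w v
    rw [fderiv_clm_apply hd (differentiableAt_const _)]
    simp
  rw [h1, h1]
  exact (hf.contDiffAt.isSymmSndFDerivAt (by rw [minSmoothness_of_isRCLikeNormedField]; exact WithTop.coe_le_coe.mpr le_top)) v w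

lemma det_smooth {M : E n → Matrix (Fin n) (Fin n) ℝ}
    (hM : ∀ i j, ContDiff ℝ (⊤ : ℕ∞) (fun u => M u i j)) :
    ContDiff ℝ (⊤ : ℕ∞) (fun u => (M u).det) := by
  simp only [Matrix.det_apply]
  apply ContDiff.sum
  intro σ _
  simp only [Units.smul_def, zsmul_eq_mul]
  exact contDiff_const.mul (contDiff_prod (fun i _ => hM (σ i) i))

lemma inv_entry_smooth {M : E n → Matrix (Fin n) (Fin n) ℝ}
    (hM : ∀ i j, ContDiff ℝ (⊤ : ℕ∞) (fun u => M u i j))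
    (hreg : ∀ u, IsUnit (M u)) (i j : Fin n) :
    ContDiff ℝ (⊤ : ℕ∞) (fun u => (M u)⁻¹ i j) := by
  have hdet : ∀ u, (M u).det ≠ 0 := fun u =>
    ((Matrix.isUnit_iff_isUnit_det _).mp (hreg u)).ne_zero
  have hinv : ∀ u, (M u)⁻¹ i j = ((M u).det)⁻¹ * (M u).adjugate i j := by
    intro u
    rw [Matrix.inv_def]
    simp [Ring.inverse_eq_inv']
  simp only [hinv]
  apply ContDiff.mul ((det_smooth hM).inv hdet)
  have : ∀ u, (M u).adjugate i j = ((M u).updateRow j (Pi.single i 1)).det := by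
    intro u; rw [Matrix.adjugate_apply]
  simp only [this]
  apply det_smooth
  intro k l
  by_cases hk : k = j
  · subst hk; simp only [Matrix.updateRow_self]; exact contDiff_const
  · simp only [Matrix.updateRow_ne hk]; exact hM k l

lemma coord1_smooth (k : Fin n) : ContDiff ℝ (⊤ : ℕ∞) (fun u : E n => u.2.1 k) :=
  (contDiff_pi.mp (contDiff_fst.comp contDiff_snd)) k

lemma coord2_smooth (k : Fin n) : ContDiff ℝ (⊤ : ℕ∞) (fun u : E n => u.2.2 k) :=
  (contDiff_pi.mp (contDiff_snd.comp contDiff_snd)) k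

lemma px_smooth {f : E n → ℝ} (hf : ContDiff ℝ (⊤ : ℕ∞) f) (i : Fin n) :
    ContDiff ℝ (⊤ : ℕ∞) (px f i) := pd_smooth hf _

lemma p1_smooth {f : E n → ℝ} (hf : ContDiff ℝ (⊤ : ℕ∞) f) (i : Fin n) :
    ContDiff ℝ (⊤ : ℕ∞) (p1 f i) := pd_smooth hf _

lemma p2_smooth {f : E n → ℝ} (hf : ContDiff ℝ (⊤ : ℕ∞) f) (i : Fin n) :
    ContDiff ℝ (⊤ : ℕ∞) (p2 f i) := pd_smooth hf _

lemma dT_smooth {f : E n → ℝ} (hf : ContDiff ℝ (⊤ : ℕ∞) f) : ContDiff ℝ (⊤ : ℕ∞) (dT f) := by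
  unfold dT
  apply ContDiff.sum
  intro k _
  exact ((coord1_smooth k).mul (px_smooth hf k)).add
    ((contDiff_const.mul (coord2_smooth k)).mul (p1_smooth hf k))

lemma gmet_smooth (L : E n → ℝ) (hL : ContDiff ℝ (⊤ : ℕ∞) L) (i j : Fin n) :
    ContDiff ℝ (⊤ : ℕ∞) (gmet L i j) := by
  unfold gmet
  exact contDiff_const.mul (pd_smooth (pd_smooth hL _) _)

lemma Gcan_smooth (L : E n → ℝ) (hL : ContDiff ℝ (⊤ : ℕ∞) L)
    (hreg : ∀ u : E n, IsUnit (gmat L u)) (j : Fin n) :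
    ContDiff ℝ (⊤ : ℕ∞) (fun u => Gcan L u j) := by
  unfold Gcan
  apply contDiff_const.mul
  apply ContDiff.sum
  intro i _
  exact (inv_entry_smooth (fun i j => gmet_smooth L hL i j) hreg j i).mul
    ((dT_smooth (p2_smooth hL i)).sub (p1_smooth hL i))

lemma Sop_smooth (G : E n → Fin n → ℝ) (hG : ∀ i, ContDiff ℝ (⊤ : ℕ∞) (fun u => G u i))
    {f : E n → ℝ} (hf : ContDiff ℝ (⊤ : ℕ∞) f) : ContDiff ℝ (⊤ : ℕ∞) (Sop G f) := by
  unfold Sop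
  apply ContDiff.sum
  intro k _
  exact (((coord1_smooth k).mul (px_smooth hf k)).add
    ((contDiff_const.mul (coord2_smooth k)).mul (p1_smooth hf k))).sub
    ((contDiff_const.mul (hG k)).mul (p2_smooth hf k))

end Helpers

/-- there is exactly one family of smooth functions `N_{ij}` with
`2N_{ij} + 4N_{ji} = 2 S(g_{ij}) + ∂²L/∂y¹ⁱ∂y²ʲ`, given by
`N_{ij} = (1/3) S(g_{ij}) + (1/3) ∂²L/∂y²ⁱ∂y¹ʲ − (1/6) ∂²L/∂y²ʲ∂y¹ⁱ`; moreover this `N`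
satisfies `2N_{ij} − 2N_{ji} = ∂²L/∂y²ⁱ∂y¹ʲ − ∂²L/∂y²ʲ∂y¹ⁱ`. -/
theorem statement14 {n : ℕ} (hn : 1 ≤ n) (L : E n → ℝ) (hL : ContDiff ℝ (⊤ : ℕ∞) L)
    (hreg : ∀ u : E n, IsUnit (gmat L u)) :
    ((∀ i j : Fin n, ContDiff ℝ (⊤ : ℕ∞) (Ncan L i j)) ∧
      (∀ (u : E n) (i j : Fin n),
        2 * Ncan L i j u + 4 * Ncan L j i u
          = 2 * Sop (Gcan L) (fun v => gmet L i j v) u + p1 (p2 L j) i u)) ∧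
    (∀ N : Fin n → Fin n → E n → ℝ,
      (∀ i j : Fin n, ContDiff ℝ (⊤ : ℕ∞) (N i j)) →
      (∀ (u : E n) (i j : Fin n),
        2 * N i j u + 4 * N j i u
          = 2 * Sop (Gcan L) (fun v => gmet L i j v) u + p1 (p2 L j) i u) →
      N = Ncan L) ∧
    (∀ (u : E n) (i j : Fin n),
      2 * Ncan L i j u - 2 * Ncan L j i u
        = p2 (p1 L j) i u - p2 (p1 L i) j u) := by
  have hg : ∀ i j : Fin n, ContDiff ℝ (⊤ : ℕ∞) (gmet L i j) := gmet_smooth L hL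
  have hGsm : ∀ j, ContDiff ℝ (⊤ : ℕ∞) (fun u => Gcan L u j) := Gcan_smooth L hL hreg
  have hSsm : ∀ i j : Fin n, ContDiff ℝ (⊤ : ℕ∞) (Sop (Gcan L) (gmet L i j)) := fun i j =>
    Sop_smooth _ hGsm (hg i j)
  have hgsym : ∀ i j : Fin n, gmet L i j = gmet L j i := by
    intro i j
    funext u
    unfold gmet
    congr 1
    exact swap_pd hL _ _ u
  have hB : ∀ (i j : Fin n) (u : E n), p1 (p2 L j) i u = p2 (p1 L i) j u := by
    intro i j u
    exact swap_pd hL _ _ u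
  have hA : ∀ (i j : Fin n) (u : E n),
      Sop (Gcan L) (fun v => gmet L j i v) u = Sop (Gcan L) (fun v => gmet L i j v) u := by
    intro i j u
    rw [hgsym i j]
  have key : ∀ (u : E n) (i j : Fin n),
      2 * Ncan L i j u + 4 * Ncan L j i u
        = 2 * Sop (Gcan L) (fun v => gmet L i j v) u + p1 (p2 L j) i u := by
    intro u i j
    unfold Ncan
    rw [hA i j u, hB i j u]
    ring
  refine ⟨⟨?_, key⟩, ?_, ?_⟩
  · intro i j
    unfold Ncan
    exact ((contDiff_const.mul (hSsm i j)).add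
      (contDiff_const.mul (pd_smooth (pd_smooth hL _) _))).sub
      (contDiff_const.mul (pd_smooth (pd_smooth hL _) _))
  · intro N _ hN
    funext i j u
    have e1 := hN u i j
    have e2 := hN u j i
    have c1 := key u i j
    have c2 := key u j i
    linarith
  · intro u i j
    unfold Ncan
    rw [hA i j u]
    ring
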